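/- Let G be a graph on at least (l+1)k + l vertices that has an l-ECOC solution S of size at most k, and suppose every connected component of G has more than l vertices. Then the number of connected components of G − S is at least |S| + 1, and consequently G admits a strict ECOC crown decomposition. -/

import Mathlib

open SimpleGraph

variable {V : Type*}

/-- Every connected component of `G.induce X` has exactly `l` vertices. -/
def AllCompsSize (G : SimpleGraph V) (X : Set V) (l : ℕ) : Prop :=
  ∀ c : (G.induce X).ConnectedComponent, Nat.card c.supp = l

/-- `S` is an `l`-ECOC solution: every component of `G - S` has exactly `l` vertices. -/
def IsECOCSol (G : SimpleGraph V) (l : ℕ) (S : Set V) : Prop :=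
  AllCompsSize G Sᶜ l

/-- The (open) neighborhood of a set `X`. -/
def nbhd (G : SimpleGraph V) (X : Set V) : Set V :=
  {v | v ∉ X ∧ ∃ u ∈ X, G.Adj u v}

/-- ECOC crown decomposition. -/
def IsECOCCrown (G : SimpleGraph V) (l : ℕ) (I J R : Set V) : Prop :=
  (I ∪ J ∪ R = Set.univ) ∧ Disjoint I J ∧ Disjoint I R ∧ Disjoint J R ∧
  AllCompsSize G I l ∧
  (∀ u ∈ I, ∀ v ∈ R, ¬ G.Adj u v) ∧
  ∃ M : J → (G.induce I).ConnectedComponent, Function.Injective M ∧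
    ∀ x : J, ∃ u ∈ (M x).supp, G.Adj (u : V) (x : V)

/-- Strict ECOC crown decomposition. -/
def IsStrictECOCCrown (G : SimpleGraph V) (l : ℕ) (I J R : Set V) : Prop :=
  IsECOCCrown G l I J R ∧ I.Nonempty ∧
  Nat.card J + 1 ≤ Nat.card ((G.induce I).ConnectedComponent)

/-- `u` and `v` lie in `X` and in the same connected component of `G.induce X`. -/
def ReachIn (G : SimpleGraph V) (X : Set V) (u v : V) : Prop :=
  ∃ (hu : u ∈ X) (hv : v ∈ X), (G.induce X).Reachable ⟨u, hu⟩ ⟨v, hv⟩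

/-- Feasibility for the LP relaxation WECOC-LP. -/
def LPFeasible (G : SimpleGraph V) (l : ℕ) (x : V → ℝ) : Prop :=
  (∀ v, 0 ≤ x v ∧ x v ≤ 1) ∧
  ∀ C : Finset V, (G.induce (C : Set V)).Connected → C.card = l + 1 →
    1 ≤ ∑ v ∈ C, x v

/-- Alternating path w.r.t. a subgraph `M`: a path whose edges at even positions
are outside `M` and at odd positions are inside `M`. -/
def AltPath (G : SimpleGraph V) (M : G.Subgraph) {u v : V} (p : G.Walk u v) : Prop :=
  p.IsPath ∧ ∀ i : Fin p.edges.length, (p.edges.get i ∈ M.edgeSet ↔ Odd i.val)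


/-!
Counting vertices, `|V| = |S| + l · c` where `c` is the number of components of `G - S`; with
`|S| ≤ k` and `|V| ≥ (l + 1) k + l` this forces `c ≥ |S| + 1`.

For the crown, consider the bipartite incidence between `S` and the components of `G - S`.
Starting from `J = S`, as long as Hall's condition fails for the components whose neighbourhood
lies in `J`, a violating set can be removed from `J` without losing the surplus
`|J| < #{components with neighbourhood in J}`. When Hall's condition holds, `J` is the head,
the union of those components is the crown `I`, and the Hall matching is the required injection.
-/

lemma SimpleGraph.card_eq_card_connectedComponent_mul {W : Type*} [Finite W]
    {H : SimpleGraph W} {l : ℕ} (h : ∀ c : H.ConnectedComponent, Nat.card c.supp = l) :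
    Nat.card W = Nat.card H.ConnectedComponent * l := by
  have := Fintype.ofFinite W
  have := Fintype.ofFinite H.ConnectedComponent
  calc Nat.card W = ∑ c : H.ConnectedComponent, Nat.card c.supp := by
        rw [← Nat.card_congr (Equiv.sigmaFiberEquiv H.connectedComponentMk), Nat.card_sigma]
        rfl
    _ = Nat.card H.ConnectedComponent * l := by
        simp [h, Nat.card_eq_fintype_card]

section Crown

variable {α β : Type*}

def confinedTo (r : α → β → Prop) (J : Set α) : Set β := {b | ∀ a, r a b → a ∈ J}

theorem exists_injective_confinedTo_of_card_lt [Finite β] (r : α → β → Prop)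
    (J₀ : Finset α) (hJ₀ : J₀.card < Nat.card (confinedTo r J₀)) :
    ∃ J ⊆ J₀, ∃ f : J → β, Function.Injective f ∧
      (∀ a : J, r a (f a) ∧ f a ∈ confinedTo r J) ∧ J.card < Nat.card (confinedTo r J) := by
  classical
  have := Fintype.ofFinite β
  induction J₀ using Finset.strongInduction with
  | H J₀ ih =>
  let N : J₀ → Finset β := fun a => (confinedTo r J₀).toFinset.filter (r a)
  by_cases hall : ∀ s : Finset J₀, s.card ≤ (s.biUnion N).card
  · obtain ⟨f, hf, hfN⟩ := (Finset.all_card_le_biUnion_card_iff_exists_injective N).mp hall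
    exact ⟨J₀, subset_rfl, f, hf, fun a => by simpa [N, and_comm] using hfN a, hJ₀⟩
  simp only [not_forall, not_le] at hall
  obtain ⟨s, hs⟩ := hall
  set T := s.map (Function.Embedding.subtype _)
  have hT : T.card = s.card := Finset.card_map _
  have hTJ : T ⊆ J₀ := by
    intro a ha
    obtain ⟨a, -, rfl⟩ := Finset.mem_map.mp ha
    exact a.2
  have hsub :
      (confinedTo r J₀).toFinset \ s.biUnion N ⊆ (confinedTo r ↑(J₀ \ T)).toFinset := by
    intro b hb
    simp only [Finset.mem_sdiff, Set.mem_toFinset] at hb ⊢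
    intro a hab
    refine Finset.mem_sdiff.mpr ⟨hb.1 a hab, fun haT => hb.2 ?_⟩
    obtain ⟨a, has, rfl⟩ := Finset.mem_map.mp haT
    exact Finset.mem_biUnion.mpr ⟨a, has, by simpa [N] using ⟨hb.1, hab⟩⟩
  have hsJ₀ := hT ▸ Finset.card_le_card hTJ
  rw [Nat.card_eq_card_toFinset] at hJ₀
  have hTne : T.Nonempty := Finset.card_pos.mp (by omega)
  obtain ⟨J, hJ, hJ'⟩ := ih (J₀ \ T) (Finset.sdiff_ssubset hTJ hTne) <|
    calc (J₀ \ T).card = J₀.card - s.card := by rw [Finset.card_sdiff_of_subset hTJ, hT]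
      _ < (confinedTo r J₀).toFinset.card - (s.biUnion N).card := by omega
      _ ≤ ((confinedTo r J₀).toFinset \ s.biUnion N).card := Finset.le_card_sdiff _ _
      _ ≤ (confinedTo r ↑(J₀ \ T)).toFinset.card := Finset.card_le_card hsub
      _ = Nat.card (confinedTo r ↑(J₀ \ T)) := (Nat.card_eq_card_toFinset _).symm
  exact ⟨J, hJ.trans Finset.sdiff_subset, hJ'⟩

end Crown

namespace SimpleGraph

def componentUnion (G : SimpleGraph V) (X : Set V) (C : Set (G.induce X).ConnectedComponent) :
    Set V :=
  {v | ∃ h : v ∈ X, (G.induce X).connectedComponentMk ⟨v, h⟩ ∈ C}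

variable {G : SimpleGraph V} {X : Set V} {C : Set (G.induce X).ConnectedComponent}

lemma componentUnion_subset : componentUnion G X C ⊆ X := fun _ ⟨h, _⟩ => h

lemma val_mem_componentUnion {w : X} :
    (w : V) ∈ componentUnion G X C ↔ (G.induce X).connectedComponentMk w ∈ C :=
  ⟨fun ⟨_, h⟩ => h, fun h => ⟨w.2, h⟩⟩

lemma mem_componentUnion_of_adj {u v : V} (hu : u ∈ componentUnion G X C) (hv : v ∈ X)
    (huv : G.Adj u v) : v ∈ componentUnion G X C := by
  obtain ⟨hu, hC⟩ := hu
  refine ⟨hv, ?_⟩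
  rwa [← ConnectedComponent.connectedComponentMk_eq_of_adj
    (show (G.induce X).Adj ⟨u, hu⟩ ⟨v, hv⟩ from huv)]

lemma reachable_induce_componentUnion_iff {u v : componentUnion G X C} :
    (G.induce (componentUnion G X C)).Reachable u v ↔
      (G.induce X).Reachable (Set.inclusion componentUnion_subset u)
        (Set.inclusion componentUnion_subset v) := by
  classical
  refine ⟨fun h => h.map (G.induceHomOfLE componentUnion_subset).toHom, fun ⟨p⟩ => ?_⟩
  let q := p.map (Embedding.induce X).toHom
  have hq : ∀ x ∈ q.support, x ∈ componentUnion G X C := by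
    intro x hx
    simp only [q, Walk.support_map, List.mem_map] at hx
    obtain ⟨y, hy, rfl⟩ := hx
    change (y : V) ∈ _
    rw [val_mem_componentUnion, ← ConnectedComponent.sound (p.takeUntil y hy).reachable]
    exact (val_mem_componentUnion (w := Set.inclusion _ u)).mp u.2
  exact ⟨q.induce _ hq⟩

variable (C) in
abbrev componentUnionMap :
    (G.induce (componentUnion G X C)).ConnectedComponent → (G.induce X).ConnectedComponent :=
  ConnectedComponent.map (G.induceHomOfLE componentUnion_subset).toHom

lemma componentUnionMap_mk (u : componentUnion G X C) :
    componentUnionMap C ((G.induce _).connectedComponentMk u) =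
      (G.induce X).connectedComponentMk (Set.inclusion componentUnion_subset u) :=
  rfl

lemma componentUnionMap_injective : Function.Injective (componentUnionMap C) :=
  ConnectedComponent.ind₂ fun _ _ h =>
    ConnectedComponent.sound (reachable_induce_componentUnion_iff.mpr (ConnectedComponent.exact h))

lemma range_componentUnionMap : Set.range (componentUnionMap C) = C := by
  ext c
  constructor
  · rintro ⟨d, rfl⟩
    induction d using ConnectedComponent.ind with
    | h u => exact val_mem_componentUnion.mp u.2
  · intro hc
    induction c using ConnectedComponent.ind with
    | h w =>
      exact ⟨_, componentUnionMap_mk (C := C) ⟨(w : V), val_mem_componentUnion.mpr hc⟩⟩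

lemma card_connectedComponent_induce_componentUnion :
    Nat.card (G.induce (componentUnion G X C)).ConnectedComponent = Nat.card C := by
  rw [← Nat.card_range_of_injective componentUnionMap_injective, range_componentUnionMap]

lemma card_supp_componentUnionMap (d : (G.induce (componentUnion G X C)).ConnectedComponent) :
    Nat.card (componentUnionMap C d).supp = Nat.card d.supp := by
  have hmaps :
      ∀ x ∈ d.supp, Set.inclusion componentUnion_subset x ∈ (componentUnionMap C d).supp :=
    fun x hx => by rw [ConnectedComponent.mem_supp_iff, ← componentUnionMap_mk, hx]
  refine (Nat.card_eq_of_bijective (fun x => ⟨_, hmaps x x.2⟩)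
    ⟨fun x y h => ?_, fun w => ?_⟩).symm
  · exact Subtype.ext (Set.inclusion_injective componentUnion_subset (congrArg Subtype.val h :))
  · have hw : (w : V) ∈ componentUnion G X C := by
      rw [val_mem_componentUnion, w.2]
      exact range_componentUnionMap.subset ⟨d, rfl⟩
    refine ⟨⟨⟨w, hw⟩, componentUnionMap_injective ?_⟩, rfl⟩
    rw [componentUnionMap_mk]
    exact w.2

end SimpleGraph

open SimpleGraph

lemma IsECOCSol.card_add_one_le_card_connectedComponent [Finite V] {G : SimpleGraph V}
    {l k : ℕ} {S : Set V} (hS : IsECOCSol G l S) (hl : 1 ≤ l)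
    (hn : (l + 1) * k + l ≤ Nat.card V) (hk : Nat.card S ≤ k) :
    Nat.card S + 1 ≤ Nat.card (G.induce Sᶜ).ConnectedComponent := by
  have hcompl := card_eq_card_connectedComponent_mul hS
  have hsplit : Nat.card S + Nat.card ↥Sᶜ = Nat.card V := by
    simpa only [Nat.card_coe_set_eq] using Set.ncard_add_ncard_compl S
  refine Nat.le_of_mul_le_mul_right ?_ hl
  nlinarith [Nat.mul_le_mul_right l hk]

theorem IsECOCSol.exists_isStrictECOCCrown [Finite V] {G : SimpleGraph V} {l : ℕ} {S : Set V}
    (hS : IsECOCSol G l S) (hcard : Nat.card S < Nat.card (G.induce Sᶜ).ConnectedComponent) :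
    ∃ I J R : Set V, IsStrictECOCCrown G l I J R := by
  obtain ⟨A, rfl⟩ := S.toFinite.exists_finset_coe
  let r (x : V) (c : (G.induce (↑A)ᶜ).ConnectedComponent) : Prop :=
    x ∈ A ∧ ∃ u ∈ c.supp, G.Adj u x
  have hA : confinedTo r A = Set.univ := Set.eq_univ_of_forall fun _ _ h => h.1
  obtain ⟨J, hJA, f, hf, hfr, hJC⟩ := exists_injective_confinedTo_of_card_lt r A
    (by rwa [hA, Nat.card_univ, ← Set.ncard_coe_finset, ← Nat.card_coe_set_eq])
  set C := confinedTo r ↑J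
  set I := componentUnion G (↑A)ᶜ C
  choose u hu hux using fun x => (hfr x).1.2
  have huI : ∀ x, (u x : V) ∈ I := fun x =>
    val_mem_componentUnion.mpr ((ConnectedComponent.mem_supp_iff _ _).mp (hu x) ▸ (hfr x).2)
  let M (x : (↑J : Set V)) : (G.induce I).ConnectedComponent :=
    (G.induce I).connectedComponentMk ⟨u x, huI x⟩
  refine ⟨I, J, (I ∪ J)ᶜ,
    ⟨⟨Set.union_compl_self _, ?_, ?_, ?_, fun d => ?_, ?_, M, ?_, ?_⟩, ?_, ?_⟩⟩
  · exact Set.disjoint_left.mpr fun v hv hvJ => componentUnion_subset hv (hJA hvJ)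
  · exact disjoint_compl_right.mono_left Set.subset_union_left
  · exact disjoint_compl_right.mono_left Set.subset_union_right
  · exact (card_supp_componentUnionMap d).symm.trans (hS _)
  · intro v hv w hw hadj
    apply hw
    by_cases hwA : w ∈ A
    · exact Or.inr (hv.2 w ⟨hwA, ⟨v, hv.1⟩, rfl, hadj⟩)
    · exact Or.inl (mem_componentUnion_of_adj hv hwA hadj)
  · intro x y h
    have hxy : f x = f y := (hu x).symm.trans ((congrArg (componentUnionMap C) h).trans (hu y))
    exact hf hxy
  · exact fun x => ⟨⟨u x, huI x⟩, rfl, hux x⟩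
  · obtain ⟨⟨c, hc⟩⟩ := (Nat.card_pos_iff.mp (by omega : 0 < Nat.card C)).1
    induction c using ConnectedComponent.ind with
    | h w => exact ⟨w, val_mem_componentUnion.mpr hc⟩
  · rw [card_connectedComponent_induce_componentUnion, Nat.card_coe_set_eq, Set.ncard_coe_finset]
    omega

theorem stmt5_general [Fintype V] (G : SimpleGraph V) (l k : ℕ) (hl : 1 ≤ l)
    (hn : (l + 1) * k + l ≤ Fintype.card V)
    (S : Set V) (hS : IsECOCSol G l S) (hk : Nat.card S ≤ k) :
    Nat.card S + 1 ≤ Nat.card ((G.induce Sᶜ).ConnectedComponent) ∧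
    ∃ I J R : Set V, IsStrictECOCCrown G l I J R := by
  have hcomps := hS.card_add_one_le_card_connectedComponent hl
    (by rwa [Nat.card_eq_fintype_card]) hk
  exact ⟨hcomps, hS.exists_isStrictECOCCrown hcomps⟩

theorem stmt5 [Fintype V] (G : SimpleGraph V) (l k : ℕ) (hl : 1 ≤ l)
    (hn : (l + 1) * k + l ≤ Fintype.card V)
    (S : Set V) (hS : IsECOCSol G l S) (hk : Nat.card S ≤ k)
    (hcomp : ∀ c : G.ConnectedComponent, l < Nat.card c.supp) :
    Nat.card S + 1 ≤ Nat.card ((G.induce Sᶜ).ConnectedComponent) ∧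
    ∃ I J R : Set V, IsStrictECOCCrown G l I J R :=
  stmt5_general G l k hl hn S hS hk
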